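/- Let J : ℝ^n → ℝ be convex and absolutely one-homogeneous satisfying (PS), i.e. ∂J(0) is the convex hull of a finite set. Let u₀ ∈ ℝ^n and let p̂ be the unique minimal-norm element of ∂J(u₀). Then there exists δ > 0 such that p̂ ∈ ∂J(u₀ − t·p̂) for all t ∈ [0, δ]. (This is the key step showing the gradient flow of J is piecewise linear in u and piecewise constant in the subgradient.) -/

import Mathlib

open RealInnerProductSpace

/-- The subdifferential of `J` at `u`:
`∂J(u) = {p | ∀ v, J v ≥ J u + ⟪p, v - u⟫}`. -/
def subdiff {n : ℕ} (J : EuclideanSpace ℝ (Fin n) → ℝ)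
    (u : EuclideanSpace ℝ (Fin n)) : Set (EuclideanSpace ℝ (Fin n)) :=
  {p | ∀ v, J u + ⟪p, v - u⟫ ≤ J v}

/-!
The subgradients of `J` at `u` are the `p ∈ ∂J(0)` with `⟪p, u⟫ = J u`, and by Hahn–Banach every
`u` has one, so `J` is the support function of `∂J(0)`; under (PS), `J = max_{f ∈ F} ⟪f, ·⟫`.
Along the ray `u₀ - t • p̂` the functional `⟪p̂, ·⟫` drops at rate `‖p̂‖²`. A point `f ∈ F` that is
inactive at `u₀` (`⟪f, u₀⟫ < J u₀`) stays below that line for small `t`; an active one lies in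
`∂J(u₀)`, so the variational inequality of the minimal-norm element, `‖p̂‖² ≤ ⟪p̂, f⟫`, makes it
drop at least as fast. Hence `J (u₀ - t • p̂) ≤ ⟪p̂, u₀ - t • p̂⟫` for small `t`, and since
`p̂ ∈ ∂J(0)` this is an equality, i.e. `p̂ ∈ ∂J(u₀ - t • p̂)`.
-/

open Filter Topology

def AbsHomogeneous {E : Type*} [AddCommGroup E] [Module ℝ E] (J : E → ℝ) : Prop :=
  ∀ (s : ℝ) (u : E), J (s • u) = |s| * J u

namespace AbsHomogeneous

variable {E : Type*} [AddCommGroup E] [Module ℝ E] {J : E → ℝ}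

theorem map_zero (hJ : AbsHomogeneous J) : J 0 = 0 := by
  simpa using hJ 0 0

theorem add_le (hJ : AbsHomogeneous J) (hconv : ConvexOn ℝ Set.univ J) (x y : E) :
    J (x + y) ≤ J x + J y := by
  have hmid := hconv.2 (Set.mem_univ x) (Set.mem_univ y) (by norm_num : (0 : ℝ) ≤ 1 / 2)
    (by norm_num : (0 : ℝ) ≤ 1 / 2) (by norm_num)
  rw [← smul_add, hJ] at hmid
  simp only [smul_eq_mul] at hmid
  norm_num at hmid
  linarith

theorem nonneg (hJ : AbsHomogeneous J) (hconv : ConvexOn ℝ Set.univ J) (u : E) : 0 ≤ J u := by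
  have h := hJ.add_le hconv u ((-1 : ℝ) • u)
  rw [hJ, neg_one_smul, add_neg_cancel, hJ.map_zero] at h
  norm_num at h
  linarith

theorem exists_linearMap_le_eq (hJ : AbsHomogeneous J) (hconv : ConvexOn ℝ Set.univ J) (v : E) :
    ∃ g : E →ₗ[ℝ] ℝ, (∀ x, g x ≤ J x) ∧ g v = J v := by
  have hker : ∀ c : ℝ, c • v = 0 → c • J v = 0 := by
    intro c hc
    have : |c| * J v = 0 := by rw [← hJ, hc, hJ.map_zero]
    rcases mul_eq_zero.1 this with h | h
    · simp [abs_eq_zero.1 h]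
    · simp [h]
  let f := LinearPMap.mkSpanSingleton' (σ := RingHom.id ℝ) v (J v) hker
  have hfJ : ∀ x : f.domain, f x ≤ J x := by
    rintro ⟨x, hx⟩
    obtain ⟨c, rfl⟩ := Submodule.mem_span_singleton.1 hx
    rw [LinearPMap.mkSpanSingleton'_apply, hJ, smul_eq_mul]
    exact mul_le_mul_of_nonneg_right (le_abs_self c) (hJ.nonneg hconv v)
  obtain ⟨g, hgf, hgJ⟩ := exists_extension_of_le_sublinear f J
    (fun c hc x => by rw [hJ, abs_of_pos hc]) (hJ.add_le hconv) hfJ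
  exact ⟨g, hgJ, (hgf ⟨v, Submodule.mem_span_singleton_self v⟩).trans
    (LinearPMap.mkSpanSingleton'_apply_self _ _ _ _)⟩

end AbsHomogeneous

theorem eventually_nhdsGE_zero_nonneg_add_mul {a b : ℝ} (ha : 0 ≤ a) (hb : a = 0 → 0 ≤ b) :
    ∀ᶠ t in 𝓝[≥] (0 : ℝ), 0 ≤ a + b * t := by
  rcases ha.eq_or_lt with rfl | ha
  · filter_upwards [self_mem_nhdsWithin] with t (ht : 0 ≤ t)
    simpa using mul_nonneg (hb rfl) ht
  · have hcont : Tendsto (fun t : ℝ => a + b * t) (𝓝[≥] 0) (𝓝 a) := by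
      have hc : Continuous fun t : ℝ => a + b * t := by fun_prop
      simpa using (hc.tendsto 0).mono_left nhdsWithin_le_nhds
    exact (hcont.eventually_const_lt ha).mono fun _ => le_of_lt

theorem Convex.norm_sq_le_inner_of_isMinOn {F : Type*} [NormedAddCommGroup F]
    [InnerProductSpace ℝ F] {K : Set F} (hK : Convex ℝ K) {p q : F} (hp : p ∈ K)
    (hmin : IsMinOn (‖·‖) K p) (hq : q ∈ K) : ‖p‖ ^ 2 ≤ ⟪p, q⟫ := by
  have : Nonempty K := ⟨⟨p, hp⟩⟩
  have hinf : ‖0 - p‖ = ⨅ w : K, ‖0 - (w : F)‖ := by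
    refine le_antisymm (le_ciInf fun w => by simpa using hmin w.2) ?_
    exact ciInf_le (f := fun w : K => ‖0 - (w : F)‖)
      ⟨0, Set.forall_mem_range.2 fun _ => norm_nonneg _⟩ ⟨p, hp⟩
  have := (norm_eq_iInf_iff_real_inner_le_zero hK hp).1 hinf q hq
  rw [zero_sub, inner_neg_left, inner_sub_right, real_inner_self_eq_norm_sq] at this
  linarith

section Subdifferential

variable {n : ℕ} {J : EuclideanSpace ℝ (Fin n) → ℝ}

theorem convex_subdiff (u : EuclideanSpace ℝ (Fin n)) : Convex ℝ (subdiff J u) := by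
  intro p hp q hq a b ha hb hab v
  have hp := hp v
  have hq := hq v
  rw [inner_add_left, real_inner_smul_left, real_inner_smul_left]
  obtain rfl : b = 1 - a := by linarith
  nlinarith [mul_le_mul_of_nonneg_left hp ha, mul_le_mul_of_nonneg_left hq hb]

theorem mem_subdiff_zero_iff (hJ : AbsHomogeneous J) {p : EuclideanSpace ℝ (Fin n)} :
    p ∈ subdiff J 0 ↔ ∀ v, ⟪p, v⟫ ≤ J v := by
  simp [subdiff, hJ.map_zero]

theorem mem_subdiff_iff (hJ : AbsHomogeneous J) {u p : EuclideanSpace ℝ (Fin n)} :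
    p ∈ subdiff J u ↔ p ∈ subdiff J 0 ∧ ⟪p, u⟫ = J u := by
  rw [mem_subdiff_zero_iff hJ]
  constructor
  · intro hp
    have h0 := hp 0
    have h2 := hp ((2 : ℝ) • u)
    rw [hJ.map_zero, zero_sub, inner_neg_right] at h0
    rw [hJ, two_smul, add_sub_cancel_right] at h2
    norm_num at h2
    refine ⟨fun v => ?_, by linarith⟩
    have := hp v
    rw [inner_sub_right] at this
    linarith
  · rintro ⟨hp, hpu⟩ v
    rw [inner_sub_right, hpu]
    linarith [hp v]

theorem exists_mem_subdiff_zero_inner_eq (hJ : AbsHomogeneous J) (hconv : ConvexOn ℝ Set.univ J)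
    (v : EuclideanSpace ℝ (Fin n)) : ∃ p ∈ subdiff J 0, ⟪p, v⟫ = J v := by
  obtain ⟨g, hgJ, hgv⟩ := hJ.exists_linearMap_le_eq hconv v
  let p := (InnerProductSpace.toDual ℝ _).symm (LinearMap.toContinuousLinearMap g)
  have hp : ∀ x, ⟪p, x⟫ = g x := fun x => InnerProductSpace.toDual_symm_apply
  exact ⟨p, (mem_subdiff_zero_iff hJ).2 fun x => (hp x).trans_le (hgJ x), (hp v).trans hgv⟩

theorem le_of_forall_inner_le (hJ : AbsHomogeneous J) (hconv : ConvexOn ℝ Set.univ J)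
    {F : Set (EuclideanSpace ℝ (Fin n))} (hF : convexHull ℝ F = subdiff J 0)
    {w : EuclideanSpace ℝ (Fin n)} {c : ℝ} (hc : ∀ f ∈ F, ⟪f, w⟫ ≤ c) : J w ≤ c := by
  obtain ⟨p, hp, hpw⟩ := exists_mem_subdiff_zero_inner_eq hJ hconv w
  have hhalf : convexHull ℝ F ⊆ {q | ⟪q, w⟫ ≤ c} :=
    convexHull_min hc (convex_halfSpace_le ((innerₗ _).flip w).isLinear c)
  rw [← hpw]
  exact hhalf (hF ▸ hp)

end Subdifferential

theorem eventually_inner_sub_smul_le {n : ℕ} {J : EuclideanSpace ℝ (Fin n) → ℝ}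
    (hJ : AbsHomogeneous J) {u₀ phat f : EuclideanSpace ℝ (Fin n)}
    (hsteep : ∀ q ∈ subdiff J u₀, ‖phat‖ ^ 2 ≤ ⟪phat, q⟫) (hf : f ∈ subdiff J 0) :
    ∀ᶠ t in 𝓝[≥] (0 : ℝ), ⟪f, u₀ - t • phat⟫ ≤ J u₀ - t * ‖phat‖ ^ 2 := by
  have hfu : ⟪f, u₀⟫ ≤ J u₀ := (mem_subdiff_zero_iff hJ).1 hf u₀
  have hactive : ⟪f, u₀⟫ = J u₀ → ‖phat‖ ^ 2 ≤ ⟪f, phat⟫ := fun h =>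
    real_inner_comm f phat ▸ hsteep f ((mem_subdiff_iff hJ).2 ⟨hf, h⟩)
  filter_upwards [eventually_nhdsGE_zero_nonneg_add_mul (sub_nonneg.2 hfu)
    fun h => sub_nonneg.2 (hactive (sub_eq_zero.1 h).symm)] with t ht
  rw [inner_sub_right, real_inner_smul_right]
  linarith

/-- piecewise-linear dynamics of the gradient flow, key step: for
polyhedral `J` (i.e. `∂J(0)` a convex hull of a finite set) and `phat` the minimal-norm
element of `∂J(u₀)`, there is `δ > 0` with `phat ∈ ∂J(u₀ - t • phat)` for all `t ∈ [0, δ]`. -/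
theorem gradient_flow_piecewise_linear_step {n : ℕ}
    (J : EuclideanSpace ℝ (Fin n) → ℝ)
    (hconv : ConvexOn ℝ Set.univ J)
    (hhom : ∀ (s : ℝ) (u : EuclideanSpace ℝ (Fin n)), J (s • u) = |s| * J u)
    (hPS : ∃ F : Finset (EuclideanSpace ℝ (Fin n)),
      convexHull ℝ (F : Set (EuclideanSpace ℝ (Fin n))) = subdiff J 0)
    (u₀ phat : EuclideanSpace ℝ (Fin n))
    (hmem : phat ∈ subdiff J u₀)
    (hmin : ∀ q ∈ subdiff J u₀, ‖phat‖ ≤ ‖q‖) :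
    ∃ δ : ℝ, 0 < δ ∧ ∀ t ∈ Set.Icc (0 : ℝ) δ, phat ∈ subdiff J (u₀ - t • phat) := by
  obtain ⟨F, hF⟩ := hPS
  obtain ⟨hphat0, hphatu⟩ := (mem_subdiff_iff hhom).1 hmem
  have hsteep : ∀ q ∈ subdiff J u₀, ‖phat‖ ^ 2 ≤ ⟪phat, q⟫ := fun q hq =>
    (convex_subdiff u₀).norm_sq_le_inner_of_isMinOn hmem (isMinOn_iff.2 hmin) hq
  have hvertices : ∀ᶠ t in 𝓝[≥] (0 : ℝ), ∀ f ∈ F, ⟪f, u₀ - t • phat⟫ ≤ J u₀ - t * ‖phat‖ ^ 2 :=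
    (eventually_all_finset F).2 fun f hf =>
      eventually_inner_sub_smul_le hhom hsteep (hF ▸ subset_convexHull ℝ _ hf)
  obtain ⟨δ, hδ, hδvertices⟩ := mem_nhdsGE_iff_exists_Icc_subset.1 hvertices
  refine ⟨δ, hδ, fun t ht => (mem_subdiff_iff hhom).2 ⟨hphat0, ?_⟩⟩
  have hline : ⟪phat, u₀ - t • phat⟫ = J u₀ - t * ‖phat‖ ^ 2 := by
    rw [inner_sub_right, real_inner_smul_right, real_inner_self_eq_norm_sq, hphatu]
  exact le_antisymm ((mem_subdiff_zero_iff hhom).1 hphat0 _)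
    (hline ▸ le_of_forall_inner_le hhom hconv hF (hδvertices ht))
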